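/- arXiv:1811.01649 — 2 statements merged into one kernel-verified Lean document; each statement's English description precedes it below -/
import Mathlib

section
/- Let \Phi(z,w,\zeta) be a formal power series with \Phi = O(\zeta^2) and let \varphi(z,\xi,\eta) be the unique formal solution of the PDE \varphi_{zz} = -i e^{i(m-1)\eta^{m-1}\varphi}\,\Phi(z, \eta e^{i\eta^{m-1}\varphi}, i e^{i(1-m)\eta^{m-1}\varphi}\varphi_z) - \eta^{m-1}(\varphi_z)^2 with Cauchy data \varphi(0,\xi,\eta) = 0 and \varphi_z(0,\xi,\eta) = \xi. Then \varphi also satisfies \varphi(z,0,\eta) = 0 and \varphi_\xi(z,0,\eta) = z. -/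
/-!
STATEMENT 5.  If `φ` solves the PDE obtained by substituting the defining equation
`w = η e^{i η^{m-1} φ(z,ξ,η)}` of an `m`-admissible Segre family into the singular ODE
`w'' = w^m Φ(z, w, w'/w^m)` (with `Φ = O(ζ²)`), with Cauchy data `φ(0,ξ,η) = 0`,
`φ_z(0,ξ,η) = ξ`, then automatically `φ(z,0,η) = 0` and `φ_ξ(z,0,η) = z`.
-/

noncomputable section

open scoped Classical

/-- Coefficientwise substitution of a tuple of power series into a series in 3 variables. -/
def msubst {σ : Type} (a : Fin 3 → MvPowerSeries σ ℂ)
    (f : MvPowerSeries (Fin 3) ℂ) : MvPowerSeries σ ℂ :=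
  fun d => ∑' e : Fin 3 →₀ ℕ,
    (MvPowerSeries.coeff (R := ℂ) e f) * MvPowerSeries.coeff (R := ℂ) d (∏ i, a i ^ e i)

/-- The formal exponential of a multivariate power series (intended for series with zero
constant term, where the sum is coefficientwise finite). -/
def mexp (S : MvPowerSeries (Fin 3) ℂ) : MvPowerSeries (Fin 3) ℂ :=
  fun d => ∑' n : ℕ, ((n.factorial : ℂ))⁻¹ * MvPowerSeries.coeff (R := ℂ) d (S ^ n)

/-- The formal partial derivative of a series in 3 variables in the `i`-th variable. -/
def pd (i : Fin 3) (f : MvPowerSeries (Fin 3) ℂ) : MvPowerSeries (Fin 3) ℂ :=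
  fun d => ((d i : ℕ) + 1 : ℂ) * MvPowerSeries.coeff (R := ℂ) (d + Finsupp.single i 1) f

/-!
Coefficients of `φ` of `ξ`-degree at most one are determined by induction on the `z`-degree.
If `φ_z` has no `ξ`-free terms up to `z`-degree `n`, then neither has `φ_z²` nor the
substituted `Φ(…, ζ)` with `ζ ∝ φ_z`, since `Φ = O(ζ²)`; both are products of two such series,
so they have no terms of `ξ`-degree `≤ 1` either. By the PDE the same holds for `φ_zz`, which
kills the corresponding coefficients of `φ` in `z`-degree `n + 2`.
-/

theorem Fin.prod_pow_eq_mul_mul_self {M : Type*} [CommMonoid M] (a : Fin 3 → M)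
    {e : Fin 3 →₀ ℕ} (he : 2 ≤ e 2) :
    ∏ k, a k ^ e k = a 0 ^ e 0 * a 1 ^ e 1 * a 2 ^ (e 2 - 2) * (a 2 * a 2) := by
  obtain ⟨k, hk⟩ := Nat.exists_eq_add_of_le' he
  rw [Fin.prod_univ_three, hk, Nat.add_sub_cancel, pow_add, sq, ← mul_assoc]

namespace MvPowerSeries

def VanishesOn {σ R : Type*} [Semiring R] (S : Set (σ →₀ ℕ)) (f : MvPowerSeries σ R) : Prop :=
  ∀ u ∈ S, coeff u f = 0

section VanishesOn

variable {σ R : Type*} {S : Set (σ →₀ ℕ)}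

theorem isLowerSet_setOf_apply_le (i : σ) (n : ℕ) : IsLowerSet {u : σ →₀ ℕ | u i ≤ n} :=
  fun _ _ hle h => (hle i).trans h

theorem isLowerSet_setOf_apply_eq_zero (i : σ) : IsLowerSet {u : σ →₀ ℕ | u i = 0} :=
  fun _ _ hle h => Nat.eq_zero_of_le_zero (h ▸ hle i)

theorem VanishesOn.sub [Ring R] {f g : MvPowerSeries σ R} (hf : VanishesOn S f)
    (hg : VanishesOn S g) : VanishesOn S (f - g) := fun u hu => by
  rw [map_sub, hf u hu, hg u hu, sub_zero]

theorem VanishesOn.mul_left [Semiring R] (hS : IsLowerSet S) {f : MvPowerSeries σ R}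
    (hf : VanishesOn S f) (g : MvPowerSeries σ R) : VanishesOn S (g * f) := fun u hu => by
  rw [coeff_mul]
  refine Finset.sum_eq_zero fun p hp => ?_
  rw [Finset.HasAntidiagonal.mem_antidiagonal] at hp
  rw [hf p.2 (hS (hp ▸ le_add_self) hu), mul_zero]

/-- If `p + q` has `i`-degree at most one, then `p` or `q` is `i`-free. -/
theorem VanishesOn.mul [Semiring R] (hS : IsLowerSet S) {i : σ} {f g : MvPowerSeries σ R}
    (hf : VanishesOn (S ∩ {u | u i = 0}) f) (hg : VanishesOn (S ∩ {u | u i = 0}) g) :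
    VanishesOn (S ∩ {u | u i ≤ 1}) (f * g) := by
  rintro u ⟨huS, hui⟩
  rw [coeff_mul]
  refine Finset.sum_eq_zero fun p hp => ?_
  rw [Finset.HasAntidiagonal.mem_antidiagonal] at hp
  have hi : p.1 i + p.2 i ≤ 1 := by rw [← Finsupp.add_apply, hp]; exact hui
  rcases Nat.eq_zero_or_pos (p.1 i) with h1 | h1
  · rw [hf p.1 ⟨hS (hp ▸ le_self_add) huS, h1⟩, zero_mul]
  · rw [hg p.2 ⟨hS (hp ▸ le_add_self) huS, (by omega : p.2 i = 0)⟩, mul_zero]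

end VanishesOn

section Substitution

variable {σ : Type} {S : Set (σ →₀ ℕ)} {i : σ} {Φ : MvPowerSeries (Fin 3) ℂ}

theorem VanishesOn.msubst (hS : IsLowerSet S)
    (hΦ : ∀ d : Fin 3 →₀ ℕ, d 2 < 2 → coeff d Φ = 0) {a : Fin 3 → MvPowerSeries σ ℂ}
    (ha : VanishesOn (S ∩ {u | u i = 0}) (a 2)) :
    VanishesOn (S ∩ {u | u i ≤ 1}) (msubst a Φ) := by
  intro u hu
  have hterm : ∀ e : Fin 3 →₀ ℕ, coeff e Φ * coeff u (∏ k, a k ^ e k) = 0 := by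
    intro e
    rcases lt_or_ge (e 2) 2 with he | he
    · rw [hΦ e he, zero_mul]
    · rw [Fin.prod_pow_eq_mul_mul_self a he,
        (ha.mul hS ha).mul_left (hS.inter (isLowerSet_setOf_apply_le i 1)) _ u hu, mul_zero]
  exact (tsum_congr hterm).trans tsum_zero

theorem vanishesOn_mul_msubst_sub_mul_sq (hS : IsLowerSet S)
    (hΦ : ∀ d : Fin 3 →₀ ℕ, d 2 < 2 → coeff d Φ = 0) {g : MvPowerSeries σ ℂ}
    (hg : VanishesOn (S ∩ {u | u i = 0}) g) (c a₀ a₁ b h : MvPowerSeries σ ℂ) :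
    VanishesOn (S ∩ {u | u i ≤ 1}) (c * msubst ![a₀, a₁, b * g] Φ - h * g ^ 2) := by
  have hS₁ := hS.inter (isLowerSet_setOf_apply_le i 1)
  have hsubst : VanishesOn (S ∩ {u | u i ≤ 1}) (msubst ![a₀, a₁, b * g] Φ) :=
    VanishesOn.msubst hS hΦ (hg.mul_left (hS.inter (isLowerSet_setOf_apply_eq_zero i)) b)
  exact (hsubst.mul_left hS₁ c).sub (sq g ▸ (hg.mul hS hg).mul_left hS₁ h)

end Substitution

theorem coeff_pd (i : Fin 3) (f : MvPowerSeries (Fin 3) ℂ) (d : Fin 3 →₀ ℕ) :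
    coeff d (pd i f) = ((d i : ℂ) + 1) * coeff (d + Finsupp.single i 1) f :=
  rfl

theorem coeff_pd_pd (i : Fin 3) (f : MvPowerSeries (Fin 3) ℂ) (d : Fin 3 →₀ ℕ) :
    coeff d (pd i (pd i f)) =
      ((d i : ℂ) + 1) * ((d i : ℂ) + 2) * coeff (d + Finsupp.single i 2) f := by
  rw [coeff_pd, coeff_pd, add_assoc, ← Finsupp.single_add]
  simp only [Finsupp.add_apply, Finsupp.single_eq_same]
  push_cast
  ring

theorem VanishesOn.pd {i j : Fin 3} (hij : i ≠ j) {n : ℕ} {f : MvPowerSeries (Fin 3) ℂ}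
    (hf : VanishesOn ({u | u i ≤ n + 1} ∩ {u | u j = 0}) f) :
    VanishesOn ({u | u i ≤ n} ∩ {u | u j = 0}) (pd i f) := by
  rintro u ⟨hui, huj⟩
  rw [coeff_pd, hf _ ⟨_, _⟩, mul_zero]
  · simpa using hui
  · simpa [Finsupp.single_apply, hij] using (huj : u j = 0)

theorem coeff_eq_zero_of_vanishesOn_pd_pd {i j : Fin 3} (hij : i ≠ j) {n k : ℕ}
    {f : MvPowerSeries (Fin 3) ℂ}
    (hf : VanishesOn ({u | u i ≤ n} ∩ {u | u j ≤ k}) (pd i (pd i f))) {d : Fin 3 →₀ ℕ}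
    (hd : 2 ≤ d i) (hdn : d i ≤ n + 2) (hdk : d j ≤ k) : coeff d f = 0 := by
  have hsplit : d - Finsupp.single i 2 + Finsupp.single i 2 = d :=
    tsub_add_cancel_of_le (Finsupp.single_le_iff.mpr hd)
  have hmem : d - Finsupp.single i 2 ∈ {u | u i ≤ n} ∩ {u | u j ≤ k} := by
    simp only [Set.mem_inter_iff, Set.mem_ofPred_eq, Finsupp.tsub_apply, Finsupp.single_apply, hij,
      if_true, if_false]
    omega
  have hcoeff := hf _ hmem
  rw [coeff_pd_pd, hsplit] at hcoeff
  exact (mul_eq_zero.mp hcoeff).resolve_left (mul_ne_zero (by norm_cast) (by norm_cast))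

end MvPowerSeries

open MvPowerSeries

theorem segre_family_normalization_in_xi_general
    (m : ℕ) (Φ φ : MvPowerSeries (Fin 3) ℂ)
    -- `Φ = O(ζ²)` (third variable `ζ`)
    (hΦ : ∀ d : Fin 3 →₀ ℕ, d 2 < 2 → MvPowerSeries.coeff (R := ℂ) d Φ = 0)
    -- Cauchy data: `φ(0, ξ, η) = 0`
    (hc0 : ∀ d : Fin 3 →₀ ℕ, d 0 = 0 → MvPowerSeries.coeff (R := ℂ) d φ = 0)
    -- Cauchy data: `φ_z(0, ξ, η) = ξ`
    (hc1 : ∀ d : Fin 3 →₀ ℕ, d 0 = 1 →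
      MvPowerSeries.coeff (R := ℂ) d φ = if d 1 = 1 ∧ d 2 = 0 then 1 else 0)
    -- the PDE (3.11):
    -- `φ_zz = -i e^{i(m-1)η^{m-1}φ} Φ(z, η e^{iη^{m-1}φ}, i e^{i(1-m)η^{m-1}φ} φ_z)
    --         - η^{m-1} (φ_z)²`
    (hPDE : pd 0 (pd 0 φ) =
      (MvPowerSeries.C (σ := Fin 3) (R := ℂ) (-Complex.I))
        * mexp (MvPowerSeries.C (σ := Fin 3) (R := ℂ) (Complex.I * ((m : ℂ) - 1))
                  * (MvPowerSeries.X 2) ^ (m - 1) * φ)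
        * msubst
            ![MvPowerSeries.X 0,
              MvPowerSeries.X 2
                * mexp (MvPowerSeries.C (σ := Fin 3) (R := ℂ) Complex.I
                    * (MvPowerSeries.X 2) ^ (m - 1) * φ),
              MvPowerSeries.C (σ := Fin 3) (R := ℂ) Complex.I
                * mexp (MvPowerSeries.C (σ := Fin 3) (R := ℂ) (Complex.I * (1 - (m : ℂ)))
                    * (MvPowerSeries.X 2) ^ (m - 1) * φ)
                * pd 0 φ] Φ
      - (MvPowerSeries.X 2) ^ (m - 1) * (pd 0 φ) ^ 2) :
    -- conclusion (3.13): `φ(z, 0, η) = 0` and `φ_ξ(z, 0, η) = z`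
    (∀ d : Fin 3 →₀ ℕ, d 1 = 0 → MvPowerSeries.coeff (R := ℂ) d φ = 0) ∧
    (∀ d : Fin 3 →₀ ℕ, d 1 = 1 →
      MvPowerSeries.coeff (R := ℂ) d φ = if d 0 = 1 ∧ d 2 = 0 then 1 else 0) := by
  have hpde : ∀ n, VanishesOn ({u | u 0 ≤ n + 1} ∩ {u | u 1 = 0}) φ →
      VanishesOn ({u | u 0 ≤ n} ∩ {u | u 1 ≤ 1}) (pd 0 (pd 0 φ)) := fun n h => by
    rw [hPDE]
    exact vanishesOn_mul_msubst_sub_mul_sq (isLowerSet_setOf_apply_le 0 n) hΦ (h.pd (by decide))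
      _ _ _ _ _
  have hlow : ∀ d : Fin 3 →₀ ℕ, d 0 ≤ 1 → d 1 = 0 → coeff d φ = 0 := by
    intro d hd0 hd1
    obtain hd0 | hd0 : d 0 = 0 ∨ d 0 = 1 := by omega
    · exact hc0 d hd0
    · simp [hc1 d hd0, hd1]
  have hξfree : ∀ n, VanishesOn ({u | u 0 ≤ n + 1} ∩ {u | u 1 = 0}) φ := by
    intro n
    induction n with
    | zero => exact fun d ⟨hd0, hd1⟩ => hlow d hd0 hd1
    | succ n ih =>
      rintro d ⟨hd0, hd1 : d 1 = 0⟩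
      rcases le_or_gt (d 0) 1 with hd | hd
      · exact hlow d hd hd1
      · exact coeff_eq_zero_of_vanishesOn_pd_pd (by decide) (hpde n ih) hd hd0 (by omega)
  refine ⟨fun d hd => hξfree (d 0) d ⟨Nat.le_succ _, hd⟩, fun d hd => ?_⟩
  obtain hd0 | hd0 | hd0 : d 0 = 0 ∨ d 0 = 1 ∨ 2 ≤ d 0 := by omega
  · simp [hc0 d hd0, hd0]
  · simp [hc1 d hd0, hd0, hd]
  · rw [coeff_eq_zero_of_vanishesOn_pd_pd (by decide) (hpde (d 0) (hξfree _)) hd0 (by omega) hd.le,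
      if_neg (by omega)]

theorem segre_family_normalization_in_xi
    (m : ℕ) (hm : 1 ≤ m) (Φ φ : MvPowerSeries (Fin 3) ℂ)
    -- `Φ = O(ζ²)` (third variable `ζ`)
    (hΦ : ∀ d : Fin 3 →₀ ℕ, d 2 < 2 → MvPowerSeries.coeff (R := ℂ) d Φ = 0)
    -- Cauchy data: `φ(0, ξ, η) = 0`
    (hc0 : ∀ d : Fin 3 →₀ ℕ, d 0 = 0 → MvPowerSeries.coeff (R := ℂ) d φ = 0)
    -- Cauchy data: `φ_z(0, ξ, η) = ξ`
    (hc1 : ∀ d : Fin 3 →₀ ℕ, d 0 = 1 →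
      MvPowerSeries.coeff (R := ℂ) d φ = if d 1 = 1 ∧ d 2 = 0 then 1 else 0)
    -- the PDE (3.11):
    -- `φ_zz = -i e^{i(m-1)η^{m-1}φ} Φ(z, η e^{iη^{m-1}φ}, i e^{i(1-m)η^{m-1}φ} φ_z)
    --         - η^{m-1} (φ_z)²`
    (hPDE : pd 0 (pd 0 φ) =
      (MvPowerSeries.C (σ := Fin 3) (R := ℂ) (-Complex.I))
        * mexp (MvPowerSeries.C (σ := Fin 3) (R := ℂ) (Complex.I * ((m : ℂ) - 1))
                  * (MvPowerSeries.X 2) ^ (m - 1) * φ)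
        * msubst
            ![MvPowerSeries.X 0,
              MvPowerSeries.X 2
                * mexp (MvPowerSeries.C (σ := Fin 3) (R := ℂ) Complex.I
                    * (MvPowerSeries.X 2) ^ (m - 1) * φ),
              MvPowerSeries.C (σ := Fin 3) (R := ℂ) Complex.I
                * mexp (MvPowerSeries.C (σ := Fin 3) (R := ℂ) (Complex.I * (1 - (m : ℂ)))
                    * (MvPowerSeries.X 2) ^ (m - 1) * φ)
                * pd 0 φ] Φ
      - (MvPowerSeries.X 2) ^ (m - 1) * (pd 0 φ) ^ 2) :
    -- conclusion (3.13): `φ(z, 0, η) = 0` and `φ_ξ(z, 0, η) = z`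
    (∀ d : Fin 3 →₀ ℕ, d 1 = 0 → MvPowerSeries.coeff (R := ℂ) d φ = 0) ∧
    (∀ d : Fin 3 →₀ ℕ, d 1 = 1 →
      MvPowerSeries.coeff (R := ℂ) d φ = if d 0 = 1 ∧ d 2 = 0 then 1 else 0) :=
  segre_family_normalization_in_xi_general m Φ φ hΦ hc0 hc1 hPDE

end
end

section
/- Let \rho(z,\xi,\eta) = \eta e^{\pm i \eta^{m-1}(z\xi + \sum_{k,l\ge2}\varphi_{kl}(\eta)z^k\xi^l)} define a positive (resp. negative) m-admissible Segre family. Then the dual defining function \rho^*, obtained by solving \eta = w e^{\pm i w^{m-1}(z\xi + O(z^2\xi^2))} for w, has the form \rho^*(z,\xi,\eta) = \eta e^{\mp i\eta^{m-1}(z\xi + O(z^2\xi^2))}; in particular the dual of a positive m-admissible family is a negative m-admissible family and vice versa. -/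
/-!
Put `M = φ(z, ξ, ρ*)` and `S = ε i (ρ*)^{m-1} M`. Since `e^S e^{-S} = 1`, the equation
`η = ρ* e^S` inverts to `ρ* = η e^{-S}`, and substituting this into `(ρ*)^{m-1}` gives
`-S = -ε i η^{m-1} (zξ + ψ)` with `ψ = e^{-(m-1)S} M - zξ`. Admissibility of `φ` makes `z²` and
`ξ²` divide `M - zξ`; hence `z` and `ξ` divide `M`, `S` and `e^{-S} - 1`, so
`ψ = (e^{-(m-1)S} - 1) M + (M - zξ)` is again divisible by `z²` and by `ξ²`.

The formal identity `e^{A+B} = e^A e^B` is checked coefficientwise: up to total degree `N`, the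
exponential of a series without constant term agrees with its Taylor polynomial of degree `N`.
-/

noncomputable section

open scoped Classical

/-- `φ` is the series `z ξ + ∑_{k,l≥2} φ_{kl}(η) z^k ξ^l` in variables `(z, ξ, η)`. -/
def IsAdmissiblePhi (φkl : ℕ → ℕ → PowerSeries ℂ) (φ : MvPowerSeries (Fin 3) ℂ) : Prop :=
  ∀ k l j : ℕ,
    MvPowerSeries.coeff (σ := Fin 3) (R := ℂ)
        (Finsupp.single 0 k + Finsupp.single 1 l + Finsupp.single 2 j) φ =
      if k = 1 ∧ l = 1 then (if j = 0 then 1 else 0)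
      else if 2 ≤ k ∧ 2 ≤ l then PowerSeries.coeff (R := ℂ) j (φkl k l)
      else 0

open MvPowerSeries Finset

theorem Finset.sum_range_sum_antidiagonal_eq_sum_range_sum_range {M : Type*} [AddCommMonoid M]
    (N : ℕ) (f : ℕ → ℕ → M) (hf : ∀ j k, N < j + k → f j k = 0) :
    ∑ n ∈ range (N + 1), ∑ p ∈ antidiagonal n, f p.1 p.2 =
      ∑ j ∈ range (N + 1), ∑ k ∈ range (N + 1), f j k := by
  set s := (range (N + 1) ×ˢ range (N + 1)).filter fun p : ℕ × ℕ => p.1 + p.2 ≤ N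
  have hfiber : ∀ n ∈ range (N + 1), s.filter (fun p => p.1 + p.2 = n) = antidiagonal n := by
    intro n hn
    ext p
    simp only [s, mem_filter, mem_product, mem_range, HasAntidiagonal.mem_antidiagonal] at hn ⊢
    omega
  rw [← sum_congr rfl fun n hn => congrArg (fun t => ∑ p ∈ t, f p.1 p.2) (hfiber n hn),
    sum_fiberwise_of_maps_to (fun p hp => by simp only [s, mem_filter, mem_range] at hp ⊢; omega),
    sum_filter_of_ne fun p _ hp => ?_, sum_product]
  by_contra h
  exact hp (hf p.1 p.2 (by omega))

namespace MvPowerSeries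

variable {σ R : Type*}

theorem coeff_mul_eq_coeff_mul_of_forall_le [Semiring R] {f f' g g' : MvPowerSeries σ R}
    {d : σ →₀ ℕ} (hf : ∀ e ≤ d, coeff e f = coeff e f') (hg : ∀ e ≤ d, coeff e g = coeff e g') :
    coeff d (f * g) = coeff d (f' * g') := by
  simp only [coeff_mul]
  refine sum_congr rfl fun p hp => ?_
  rw [HasAntidiagonal.mem_antidiagonal] at hp
  rw [hf p.1 (hp ▸ le_self_add), hg p.2 (hp ▸ le_add_self)]

theorem constantCoeff_eq_zero_of_X_dvd [Semiring R] {S : MvPowerSeries σ R} {s : σ}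
    (h : X s ∣ S) : constantCoeff S = 0 := by
  simpa using X_dvd_iff.mp h 0 rfl

theorem coeff_pow_mul_pow_eq_zero [Semiring R] {A B : MvPowerSeries σ R}
    (hA : constantCoeff A = 0) (hB : constantCoeff B = 0) {d : σ →₀ ℕ} {j k : ℕ}
    (hd : d.degree < j + k) : coeff d (A ^ j * B ^ k) = 0 :=
  coeff_of_lt_order <| calc
    (d.degree : ℕ∞) < j + k := mod_cast hd
    _ ≤ (A ^ j).order + (B ^ k).order := add_le_add
        (le_order_pow_of_constantCoeff_eq_zero j hA) (le_order_pow_of_constantCoeff_eq_zero k hB)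
    _ ≤ (A ^ j * B ^ k).order := le_order_mul

theorem C_inv_factorial_mul_add_pow [Field R] [CharZero R] (A B : MvPowerSeries σ R) (n : ℕ) :
    C ((n.factorial : R)⁻¹) * (A + B) ^ n = ∑ p ∈ antidiagonal n,
      (C ((p.1.factorial : R)⁻¹) * A ^ p.1) * (C ((p.2.factorial : R)⁻¹) * B ^ p.2) := by
  have h := congrArg (PowerSeries.coeff n) (PowerSeries.exp_mul_exp_eq_exp_add A B)
  simp only [PowerSeries.coeff_mul, PowerSeries.coeff_rescale, PowerSeries.coeff_exp,
    algebraMap_apply, one_div, map_inv₀, map_natCast] at h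
  simp only [mul_comm (C _)]
  exact h.symm

end MvPowerSeries

theorem dvd_of_sq_dvd_sub {R : Type*} [CommRing R] {x M P : R} (hMP : x ^ 2 ∣ M - P)
    (hP : x ∣ P) : x ∣ M := by
  simpa using dvd_add ((dvd_pow_self x two_ne_zero).trans hMP) hP

theorem sq_dvd_pow_mul_sub_of_dvd {R : Type*} [CommRing R] {x V M P : R} (hV : x ∣ V - 1)
    (hM : x ∣ M) (hMP : x ^ 2 ∣ M - P) (n : ℕ) : x ^ 2 ∣ V ^ n * M - P := by
  have hVn : x ∣ V ^ n - 1 := hV.trans (by simpa using sub_dvd_pow_sub_pow V 1 n)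
  rw [show V ^ n * M - P = (V ^ n - 1) * M + (M - P) by ring, sq]
  exact dvd_add (mul_dvd_mul hVn hM) (sq x ▸ hMP)

def mexpPartialSum (N : ℕ) (S : MvPowerSeries (Fin 3) ℂ) : MvPowerSeries (Fin 3) ℂ :=
  ∑ n ∈ range (N + 1), C ((n.factorial : ℂ)⁻¹) * S ^ n

section mexp

variable {S A B : MvPowerSeries (Fin 3) ℂ}

theorem coeff_mexp_eq_coeff_mexpPartialSum (hS : constantCoeff S = 0) {d : Fin 3 →₀ ℕ} {N : ℕ}
    (hd : d.degree ≤ N) : coeff d (mexp S) = coeff d (mexpPartialSum N S) := by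
  have hvanish : ∀ n ∉ range (N + 1), (n.factorial : ℂ)⁻¹ * coeff d (S ^ n) = 0 := by
    intro n hn
    rw [mem_range, not_lt] at hn
    rw [coeff_of_lt_order ((Nat.cast_lt.mpr (by omega)).trans_le
      (le_order_pow_of_constantCoeff_eq_zero n hS)), mul_zero]
  simp only [mexpPartialSum, map_sum, coeff_C_mul]
  exact tsum_eq_sum hvanish

theorem coeff_mexpPartialSum_add (hA : constantCoeff A = 0) (hB : constantCoeff B = 0)
    {d : Fin 3 →₀ ℕ} {N : ℕ} (hd : d.degree ≤ N) :
    coeff d (mexpPartialSum N (A + B)) = coeff d (mexpPartialSum N A * mexpPartialSum N B) := by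
  simp only [mexpPartialSum, C_inv_factorial_mul_add_pow, sum_mul_sum, map_sum]
  refine sum_range_sum_antidiagonal_eq_sum_range_sum_range N
    (fun j k => coeff d (C ((j.factorial : ℂ)⁻¹) * A ^ j * (C ((k.factorial : ℂ)⁻¹) * B ^ k)))
    fun j k hjk => ?_
  rw [mul_mul_mul_comm, ← map_mul, coeff_C_mul, coeff_pow_mul_pow_eq_zero hA hB (by omega),
    mul_zero]

theorem mexp_add (hA : constantCoeff A = 0) (hB : constantCoeff B = 0) :
    mexp (A + B) = mexp A * mexp B := by
  ext d
  have htrunc : ∀ {S}, constantCoeff S = 0 → ∀ e ≤ d,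
      coeff e (mexp S) = coeff e (mexpPartialSum d.degree S) :=
    fun hS e he => coeff_mexp_eq_coeff_mexpPartialSum hS (Finsupp.degree_mono he)
  rw [htrunc (by rw [map_add, hA, hB, add_zero]) d le_rfl, coeff_mexpPartialSum_add hA hB le_rfl,
    coeff_mul_eq_coeff_mul_of_forall_le (htrunc hA) (htrunc hB)]

theorem mexp_zero : mexp 0 = 1 := by
  ext d
  rw [coeff_mexp_eq_coeff_mexpPartialSum (map_zero _) le_rfl]
  simp [mexpPartialSum, sum_range_succ']

theorem mexp_mul_mexp_neg (hS : constantCoeff S = 0) : mexp S * mexp (-S) = 1 := by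
  rw [← mexp_add hS (by rw [map_neg, hS, neg_zero]), add_neg_cancel, mexp_zero]

theorem X_dvd_mexp_sub_one {s : Fin 3} (h : X s ∣ S) : X s ∣ mexp S - 1 := by
  have hS := constantCoeff_eq_zero_of_X_dvd h
  refine X_dvd_iff.mpr fun d hd => ?_
  have hpartial : X s ∣ mexpPartialSum d.degree S - 1 := by
    rw [mexpPartialSum, sum_range_succ']
    simp only [pow_zero, Nat.factorial_zero, Nat.cast_one, inv_one, map_one, mul_one,
      add_sub_cancel_right]
    exact dvd_sum fun n _ => dvd_mul_of_dvd_right (dvd_pow h n.succ_ne_zero) _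
  rw [map_sub, coeff_mexp_eq_coeff_mexpPartialSum hS le_rfl, ← map_sub]
  exact X_dvd_iff.mp hpartial d hd

end mexp

theorem X_sq_dvd_mexp_pow_mul_sub {s : Fin 3} {M P : MvPowerSeries (Fin 3) ℂ}
    (c : MvPowerSeries (Fin 3) ℂ) (hMP : X s ^ 2 ∣ M - P) (hP : X s ∣ P) (n : ℕ) :
    X s ^ 2 ∣ mexp (c * M) ^ n * M - P := by
  have hM := dvd_of_sq_dvd_sub hMP hP
  exact sq_dvd_pow_mul_sub_of_dvd (X_dvd_mexp_sub_one (dvd_mul_of_dvd_right hM c)) hM hMP n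

theorem coeff_eq_zero_of_X_sq_dvd {ψ : MvPowerSeries (Fin 3) ℂ} (h0 : X 0 ^ 2 ∣ ψ)
    (h1 : X 1 ^ 2 ∣ ψ) (d : Fin 3 →₀ ℕ) (hd : ¬(2 ≤ d 0 ∧ 2 ≤ d 1)) : coeff d ψ = 0 := by
  rcases not_and_or.mp hd with hd | hd
  · exact X_pow_dvd_iff.mp h0 d (not_le.mp hd)
  · exact X_pow_dvd_iff.mp h1 d (not_le.mp hd)

theorem Finsupp.eq_single_add_single_add_single (e : Fin 3 →₀ ℕ) :
    e = Finsupp.single 0 (e 0) + Finsupp.single 1 (e 1) + Finsupp.single 2 (e 2) := by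
  ext i
  fin_cases i <;> simp

namespace IsAdmissiblePhi

variable {φkl : ℕ → ℕ → PowerSeries ℂ} {φ : MvPowerSeries (Fin 3) ℂ}

theorem coeff_single_add_single (hφ : IsAdmissiblePhi φkl φ) :
    coeff (Finsupp.single 0 1 + Finsupp.single 1 1) φ = 1 := by
  simpa using hφ 1 1 0

theorem coeff_eq_zero (hφ : IsAdmissiblePhi φkl φ) {e : Fin 3 →₀ ℕ}
    (he : e ≠ Finsupp.single 0 1 + Finsupp.single 1 1) (h2 : ¬(2 ≤ e 0 ∧ 2 ≤ e 1)) :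
    coeff e φ = 0 := by
  have h := hφ (e 0) (e 1) (e 2)
  rw [← Finsupp.eq_single_add_single_add_single] at h
  rw [h, if_neg h2]
  split_ifs with h11 h20
  · refine absurd ?_ he
    rw [Finsupp.eq_single_add_single_add_single e, h11.1, h11.2, h20]
    simp
  all_goals rfl

theorem coeff_msubst_sub_X_mul_X (hφ : IsAdmissiblePhi φkl φ) (ρ : MvPowerSeries (Fin 3) ℂ)
    {d : Fin 3 →₀ ℕ} (hd : d 0 < 2 ∨ d 1 < 2) :
    coeff d (msubst ![X 0, X 1, ρ] φ - X 0 * X 1) = 0 := by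
  set a : Fin 3 → MvPowerSeries (Fin 3) ℂ := ![X 0, X 1, ρ]
  have hterm : ∀ e ≠ Finsupp.single 0 1 + Finsupp.single 1 1,
      coeff e φ * coeff d (∏ i, a i ^ e i) = 0 := by
    intro e he
    by_cases h2 : 2 ≤ e 0 ∧ 2 ≤ e 1
    · have hprod : ∀ i, X i ^ 2 ∣ a i ^ e i → X i ^ 2 ∣ ∏ i, a i ^ e i :=
        fun i hi => hi.trans (dvd_prod_of_mem (fun i => a i ^ e i) (mem_univ i))
      have hzero : coeff d (∏ i, a i ^ e i) = 0 := by
        rcases hd with hd | hd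
        · exact X_pow_dvd_iff.mp (hprod 0 (pow_dvd_pow _ h2.1)) d hd
        · exact X_pow_dvd_iff.mp (hprod 1 (pow_dvd_pow _ h2.2)) d hd
      rw [hzero, mul_zero]
    · rw [hφ.coeff_eq_zero he h2, zero_mul]
  rw [map_sub, show coeff d (msubst a φ) = ∑' e, coeff e φ * coeff d (∏ i, a i ^ e i) from rfl,
    tsum_eq_single _ hterm, hφ.coeff_single_add_single, one_mul, sub_eq_zero]
  simp [a, Fin.prod_univ_three]

end IsAdmissiblePhi

theorem dual_of_admissible_Segre_family_is_admissible_with_opposite_sign_general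
    (m : ℕ) (ε : ℤ)
    (φkl : ℕ → ℕ → PowerSeries ℂ) (φ : MvPowerSeries (Fin 3) ℂ)
    (hφ : IsAdmissiblePhi φkl φ)
    (ρs : MvPowerSeries (Fin 3) ℂ)
    -- `ρ*` solves `η = w e^{ε i w^{m-1} φ(z, ξ, w)}` for `w`:
    (hsolve : MvPowerSeries.X 2 =
      ρs * mexp (MvPowerSeries.C (σ := Fin 3) (R := ℂ) ((ε : ℂ) * Complex.I) * ρs ^ (m - 1)
        * msubst ![MvPowerSeries.X 0, MvPowerSeries.X 1, ρs] φ)) :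
    ∃ ψ : MvPowerSeries (Fin 3) ℂ,
      (∀ d : Fin 3 →₀ ℕ, ¬(2 ≤ d 0 ∧ 2 ≤ d 1) → MvPowerSeries.coeff (R := ℂ) d ψ = 0) ∧
      ρs = MvPowerSeries.X 2
        * mexp (MvPowerSeries.C (σ := Fin 3) (R := ℂ) (-(ε : ℂ) * Complex.I)
            * (MvPowerSeries.X 2) ^ (m - 1)
            * (MvPowerSeries.X 0 * MvPowerSeries.X 1 + ψ)) := by
  set M := msubst ![X 0, X 1, ρs] φ
  set c : MvPowerSeries (Fin 3) ℂ := C ((ε : ℂ) * Complex.I) * ρs ^ (m - 1)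
  have hM0 : X 0 ^ 2 ∣ M - X 0 * X 1 :=
    X_pow_dvd_iff.mpr fun d hd => hφ.coeff_msubst_sub_X_mul_X ρs (.inl hd)
  have hM1 : X 1 ^ 2 ∣ M - X 0 * X 1 :=
    X_pow_dvd_iff.mpr fun d hd => hφ.coeff_msubst_sub_X_mul_X ρs (.inr hd)
  have hcM : constantCoeff (c * M) = 0 := constantCoeff_eq_zero_of_X_dvd <|
    dvd_mul_of_dvd_right (dvd_of_sq_dvd_sub hM0 (dvd_mul_right _ _)) c
  have hρ : ρs = X 2 * mexp (-c * M) := by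
    rw [hsolve, mul_assoc, neg_mul, mexp_mul_mexp_neg hcM, mul_one]
  refine ⟨mexp (-c * M) ^ (m - 1) * M - X 0 * X 1,
    coeff_eq_zero_of_X_sq_dvd (X_sq_dvd_mexp_pow_mul_sub _ hM0 (dvd_mul_right _ _) _)
      (X_sq_dvd_mexp_pow_mul_sub _ hM1 (dvd_mul_left _ _) _), ?_⟩
  have hexponent : C (-(ε : ℂ) * Complex.I) * X 2 ^ (m - 1) *
      (X 0 * X 1 + (mexp (-c * M) ^ (m - 1) * M - X 0 * X 1)) = -c * M := calc
    _ = -(C ((ε : ℂ) * Complex.I) * (X 2 * mexp (-c * M)) ^ (m - 1) * M) := by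
      rw [add_sub_cancel, neg_mul, map_neg]
      ring
    _ = -c * M := by rw [← hρ, neg_mul]
  rwa [hexponent]

theorem dual_of_admissible_Segre_family_is_admissible_with_opposite_sign
    (m : ℕ) (hm : 1 ≤ m) (ε : ℤ) (hε : ε = 1 ∨ ε = -1)
    (φkl : ℕ → ℕ → PowerSeries ℂ) (φ : MvPowerSeries (Fin 3) ℂ)
    (hφ : IsAdmissiblePhi φkl φ)
    (ρs : MvPowerSeries (Fin 3) ℂ)
    (hρs0 : MvPowerSeries.constantCoeff (σ := Fin 3) (R := ℂ) ρs = 0)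
    -- `ρ*` solves `η = w e^{ε i w^{m-1} φ(z, ξ, w)}` for `w`:
    (hsolve : MvPowerSeries.X 2 =
      ρs * mexp (MvPowerSeries.C (σ := Fin 3) (R := ℂ) ((ε : ℂ) * Complex.I) * ρs ^ (m - 1)
        * msubst ![MvPowerSeries.X 0, MvPowerSeries.X 1, ρs] φ)) :
    ∃ ψ : MvPowerSeries (Fin 3) ℂ,
      (∀ d : Fin 3 →₀ ℕ, ¬(2 ≤ d 0 ∧ 2 ≤ d 1) → MvPowerSeries.coeff (R := ℂ) d ψ = 0) ∧
      ρs = MvPowerSeries.X 2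
        * mexp (MvPowerSeries.C (σ := Fin 3) (R := ℂ) (-(ε : ℂ) * Complex.I)
            * (MvPowerSeries.X 2) ^ (m - 1)
            * (MvPowerSeries.X 0 * MvPowerSeries.X 1 + ψ)) :=
  dual_of_admissible_Segre_family_is_admissible_with_opposite_sign_general m ε φkl φ hφ ρs hsolve

end
end
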